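/- arXiv:2401.14806 — 3 statements merged into one kernel-verified Lean document; each statement's English description precedes it below -/
import Mathlib

section
/- Let G be a finite group, Z a finite G-set, n a positive integer, and H ≤ G a subgroup. Then the G-set {1,...,n}^Z × G/H (with G acting diagonally, on {1,...,n}^Z by precomposition with the Z-action and on G/H by left translation) has exactly n^{|Z/H|} orbits whose stabilizer is conjugate to H, where |Z/H| denotes the number of H-orbits of Z. -/
open MulAction

/-- The `G`-set `{1,…,n}^Z`: functions `Z → Fin n` with `(g • f) z = f (g⁻¹ • z)`. -/
noncomputable instance funPowAction (G Z : Type) [Group G] [MulAction G Z] (n : ℕ) :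
    MulAction G (Z → Fin n) where
  smul g f := fun z => f (g⁻¹ • z)
  one_smul f := by funext z; show f ((1 : G)⁻¹ • z) = f z; simp
  mul_smul g h f := by
    funext z
    show f ((g * h)⁻¹ • z) = f (h⁻¹ • g⁻¹ • z)
    rw [mul_inv_rev, mul_smul]

section Aux

variable {G Z : Type} [Group G] [MulAction G Z] {n : ℕ} {H : Subgroup G}

lemma funPow_smul_apply (g : G) (f : Z → Fin n) (z : Z) : (g • f) z = f (g⁻¹ • z) := rfl

lemma conj_one_map (H : Subgroup G) : H.map (MulAut.conj (1 : G)).toMonoidHom = H := by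
  ext x
  simp [Subgroup.mem_map]

/-- If `f` is `H`-invariant, the stabilizer of `(f, 1)` is exactly `H`. -/
lemma stab_pair_eq (f : Z → Fin n) (hf : ∀ h ∈ H, h • f = f) :
    stabilizer G ((f, ((1 : G) : G ⧸ H)) : (Z → Fin n) × (G ⧸ H)) = H := by
  ext g
  rw [mem_stabilizer_iff]
  constructor
  · intro hg
    have h2 : g • ((1 : G) : G ⧸ H) = ((1 : G) : G ⧸ H) := congrArg Prod.snd hg
    have : g ∈ stabilizer G ((1 : G) : G ⧸ H) := h2
    rwa [stabilizer_quotient] at this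
  · intro hg
    have h2 : g ∈ stabilizer G ((1 : G) : G ⧸ H) := by
      rw [stabilizer_quotient]; exact hg
    exact Prod.ext (hf g hg) h2

end Aux

/-- Let `G` be a finite group, `Z` a finite `G`-set, `n ≥ 1` and `H ≤ G`.
The `G`-set `{1,…,n}^Z × G/H` (diagonal action) has exactly `n ^ |Z/H|` orbits whose
stabilizer is conjugate to `H`, where `|Z/H|` is the number of `H`-orbits of `Z`. -/
theorem card_orbits_of_type_coset
    (G : Type) [Group G] [Fintype G] (Z : Type) [Fintype Z] [MulAction G Z]
    (n : ℕ) (hn : 1 ≤ n) (H : Subgroup G) :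
    Nat.card {q : MulAction.orbitRel.Quotient G ((Z → Fin n) × (G ⧸ H)) //
        ∃ w : (Z → Fin n) × (G ⧸ H), (Quotient.mk'' w : MulAction.orbitRel.Quotient G _) = q ∧
          ∃ g : G, MulAction.stabilizer G w = H.map (MulAut.conj g).toMonoidHom}
      = n ^ Nat.card (MulAction.orbitRel.Quotient H Z) := by
  classical
  -- Each `F : Z/H → Fin n` gives an `H`-invariant function `Z → Fin n`, hence an orbit
  -- with stabilizer `H`.
  have inv_of_F : ∀ F : MulAction.orbitRel.Quotient H Z → Fin n, ∀ h ∈ H,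
      h • (fun z => F (Quotient.mk'' z)) = (fun z => F (Quotient.mk'' z)) := by
    intro F h hh
    funext z
    show F (Quotient.mk'' (h⁻¹ • z)) = F (Quotient.mk'' z)
    congr 1
    exact Quotient.sound' ⟨⟨h⁻¹, H.inv_mem hh⟩, rfl⟩
  let Φ : (MulAction.orbitRel.Quotient H Z → Fin n) →
      {q : MulAction.orbitRel.Quotient G ((Z → Fin n) × (G ⧸ H)) //
        ∃ w : (Z → Fin n) × (G ⧸ H), (Quotient.mk'' w : MulAction.orbitRel.Quotient G _) = q ∧
          ∃ g : G, MulAction.stabilizer G w = H.map (MulAut.conj g).toMonoidHom} :=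
    fun F => ⟨Quotient.mk'' ((fun z => F (Quotient.mk'' z)), ((1 : G) : G ⧸ H)),
      ⟨((fun z => F (Quotient.mk'' z)), ((1 : G) : G ⧸ H)), rfl,
        ⟨1, by rw [conj_one_map, stab_pair_eq _ (inv_of_F F)]⟩⟩⟩
  have hinj : Function.Injective Φ := by
    intro F F' hFF'
    have h1 : (Quotient.mk'' ((fun z => F (Quotient.mk'' z)), ((1 : G) : G ⧸ H))
        : MulAction.orbitRel.Quotient G ((Z → Fin n) × (G ⧸ H)))
        = Quotient.mk'' ((fun z => F' (Quotient.mk'' z)), ((1 : G) : G ⧸ H)) :=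
      congrArg Subtype.val hFF'
    obtain ⟨g, hg⟩ := Quotient.eq''.mp h1
    have hsnd : g • ((1 : G) : G ⧸ H) = ((1 : G) : G ⧸ H) := congrArg Prod.snd hg
    have hgH : g ∈ H := by
      have : g ∈ stabilizer G ((1 : G) : G ⧸ H) := hsnd
      rwa [stabilizer_quotient] at this
    have hfst : g • (fun z => F' (Quotient.mk'' z)) = (fun z => F (Quotient.mk'' z)) :=
      congrArg Prod.fst hg
    rw [inv_of_F F' g hgH] at hfst
    funext q
    induction q using Quotient.inductionOn' with
    | h z => exact (congrFun hfst z).symm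
  have hsurj : Function.Surjective Φ := by
    rintro ⟨q, w, hwq, g, hstab⟩
    obtain ⟨a, ha⟩ := QuotientGroup.mk_surjective w.2
    -- translate the representative so that the coset component is `1`.
    set f' : Z → Fin n := a⁻¹ • w.1 with hf'
    have hw' : a⁻¹ • w = (f', ((1 : G) : G ⧸ H)) := by
      refine Prod.ext rfl ?_
      show a⁻¹ • w.2 = _
      rw [← ha, MulAction.Quotient.smul_mk]
      simp
    -- the stabilizer of the translated point is a conjugate of `H` contained in `H`
    have hstab' : stabilizer G ((f', ((1 : G) : G ⧸ H)) : (Z → Fin n) × (G ⧸ H))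
        = H.map (MulAut.conj (a⁻¹ * g)).toMonoidHom := by
      rw [← hw', stabilizer_smul_eq_stabilizer_map_conj, hstab, Subgroup.map_map]
      congr 1
      ext x
      simp [mul_assoc]
    have hle : stabilizer G ((f', ((1 : G) : G ⧸ H)) : (Z → Fin n) × (G ⧸ H)) ≤ H := by
      intro x hx
      have hsnd : x • ((1 : G) : G ⧸ H) = ((1 : G) : G ⧸ H) :=
        congrArg Prod.snd (mem_stabilizer_iff.mp hx)
      have : x ∈ stabilizer G ((1 : G) : G ⧸ H) := hsnd
      rwa [stabilizer_quotient] at this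
    have hcard : Nat.card H ≤
        Nat.card (stabilizer G ((f', ((1 : G) : G ⧸ H)) : (Z → Fin n) × (G ⧸ H))) := by
      rw [hstab']
      exact le_of_eq (Nat.card_congr
        (Subgroup.equivMapOfInjective H _ (MulAut.conj (a⁻¹ * g)).injective).toEquiv)
    have hstabH : stabilizer G ((f', ((1 : G) : G ⧸ H)) : (Z → Fin n) × (G ⧸ H)) = H :=
      Subgroup.eq_of_le_of_card_ge hle hcard
    -- hence `f'` is `H`-invariant and descends to the quotient
    have hinv : ∀ h ∈ H, h • f' = f' := by
      intro h hh
      have : h ∈ stabilizer G ((f', ((1 : G) : G ⧸ H)) : (Z → Fin n) × (G ⧸ H)) := by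
        rw [hstabH]; exact hh
      exact congrArg Prod.fst (mem_stabilizer_iff.mp this)
    let F : MulAction.orbitRel.Quotient H Z → Fin n :=
      fun qz => Quotient.liftOn' qz f' (by
        rintro z z' ⟨h, rfl⟩
        show f' ((h : G) • z') = f' z'
        conv_lhs => rw [← hinv (h : G) h.2]
        show f' ((h : G)⁻¹ • (h : G) • z') = f' z'
        rw [← mul_smul, inv_mul_cancel, one_smul])
    refine ⟨F, Subtype.ext ?_⟩
    show (Quotient.mk'' ((fun z => F (Quotient.mk'' z)), ((1 : G) : G ⧸ H))
        : MulAction.orbitRel.Quotient G ((Z → Fin n) × (G ⧸ H))) = q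
    have hFf : (fun z => F (Quotient.mk'' z)) = f' := rfl
    rw [hFf, ← hw', ← hwq]
    exact Quotient.sound' ⟨a⁻¹, rfl⟩
  have hbij : Function.Bijective Φ := ⟨hinj, hsurj⟩
  rw [← Nat.card_eq_of_bijective Φ hbij, Nat.card_fun, Nat.card_eq_fintype_card (α := Fin n),
    Fintype.card_fin]
end

section
/- Let G be a finite group and let A(G) be its Burnside ring. Let Z be a finite G-set and n ≥ 1, and let [n^Z] ∈ A(G) denote the class of the G-set of functions Z → {1,...,n} with action by precomposition. Then, with H_1,...,H_k a set of representatives of conjugacy classes of subgroups of G, the element ∏_{i=1}^{k} ([n^Z] − n^{|Z/H_i|}) is zero in A(G), where |Z/H_i| is the number of H_i-orbits of Z. -/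
/-- A bundled finite `G`-set. -/
structure FinGSet (G : Type) [Group G] : Type 1 where
  X : Type
  [fin : Fintype X]
  [act : MulAction G X]

attribute [instance] FinGSet.fin FinGSet.act

namespace FinGSet

variable {G : Type} [Group G]

/-- Disjoint union of finite `G`-sets. -/
noncomputable def sum (A B : FinGSet G) : FinGSet G where
  X := A.X ⊕ B.X
  act :=
    { smul := fun g => Sum.map (fun a => g • a) (fun b => g • b)
      one_smul := by intro x; cases x <;> simp [Sum.map]
      mul_smul := by intro g h x; cases x <;> simp [Sum.map, mul_smul] }

/-- Cartesian product of finite `G`-sets (diagonal action). -/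
noncomputable def prod (A B : FinGSet G) : FinGSet G where
  X := A.X × B.X

/-- The one-point `G`-set. -/
noncomputable def pt : FinGSet G where
  X := PUnit
  act := { smul := fun _ x => x, one_smul := fun _ => rfl, mul_smul := fun _ _ _ => rfl }

/-- The `G`-set of functions `Z → Fin n` with `G` acting by precomposition with the inverse. -/
noncomputable def funPow (Z : Type) [Fintype Z] [DecidableEq Z] [MulAction G Z] (n : ℕ) :
    FinGSet G where
  X := Z → Fin n
  act :=
    { smul := fun g f z => f (g⁻¹ • z)
      one_smul := by intro f; funext z; show f ((1 : G)⁻¹ • z) = f z; simp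
      mul_smul := by
        intro g h f; funext z
        show f ((g * h)⁻¹ • z) = f (h⁻¹ • g⁻¹ • z)
        rw [mul_inv_rev, mul_smul] }

/-- Isomorphism (equivariant bijection) of finite `G`-sets. -/
def Iso (A B : FinGSet G) : Prop :=
  ∃ e : A.X ≃ B.X, ∀ (g : G) (x : A.X), e (g • x) = g • e x

end FinGSet

/-!
Marks `X ↦ |X^K|` are ring homomorphisms out of the Burnside ring, and together they detect
isomorphism (Burnside): if `X` and `Y` have the same marks, a point of `X` whose stabilizer `H`
is maximal has a twin in `Y` with stabilizer exactly `H`, the two orbits are isomorphic, and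
one removes them and inducts. Expanding the product writes it as `[P] - [N]` for genuine
`G`-sets `P` and `N`. The mark of `[n^Z]` at `K` is `n^|Z/K|`, which only depends on the
conjugacy class of `K`, so at every `K` one factor of the product of marks vanishes: `P` and `N`
have the same marks, hence are isomorphic.
-/

open MulAction

theorem MulAction.mem_fixedPoints_iff_le_stabilizer {G X : Type*} [Group G] [MulAction G X]
    {K : Subgroup G} {x : X} : x ∈ fixedPoints K X ↔ K ≤ stabilizer G x :=
  ⟨fun h k hk => h ⟨k, hk⟩, fun h k => h k.2⟩

theorem MulAction.orbitEquivQuotientStabilizer_symm_smul {G X : Type*} [Group G] [MulAction G X]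
    (x : X) (g : G) (q : G ⧸ stabilizer G x) :
    ((orbitEquivQuotientStabilizer G x).symm (g • q) : X) =
      g • ((orbitEquivQuotientStabilizer G x).symm q : X) := by
  induction q using QuotientGroup.induction_on with
  | H a => rw [Quotient.smul_mk, orbitEquivQuotientStabilizer_symm_apply,
      orbitEquivQuotientStabilizer_symm_apply, smul_eq_mul, mul_smul]

def MulAction.orbitSubMulAction (G : Type*) {X : Type*} [Group G] [MulAction G X] (x : X) :
    SubMulAction G X where
  carrier := orbit G x
  smul_mem' g _ hz := mem_orbit_of_mem_orbit g hz

namespace FinGSet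

variable {G : Type} [Group G]

theorem Iso.symm {X Y : FinGSet G} (h : Iso X Y) : Iso Y X := by
  obtain ⟨e, he⟩ := h
  exact ⟨e.symm, fun g y => e.injective (by rw [he, e.apply_symm_apply, e.apply_symm_apply])⟩

theorem Iso.trans {X Y W : FinGSet G} (h₁ : Iso X Y) (h₂ : Iso Y W) : Iso X W := by
  obtain ⟨e, he⟩ := h₁
  obtain ⟨f, hf⟩ := h₂
  exact ⟨e.trans f, fun g x => by simp [he, hf]⟩

theorem Iso.sum_congr {X X' Y Y' : FinGSet G} (h₁ : Iso X X') (h₂ : Iso Y Y') :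
    Iso (X.sum Y) (X'.sum Y') := by
  obtain ⟨e, he⟩ := h₁
  obtain ⟨f, hf⟩ := h₂
  refine ⟨Equiv.sumCongr e f, ?_⟩
  rintro g (x | y)
  · exact congrArg Sum.inl (he g x)
  · exact congrArg Sum.inr (hf g y)

theorem iso_of_isEmpty {X Y : FinGSet G} (hX : IsEmpty X.X) (hY : IsEmpty Y.X) : Iso X Y :=
  ⟨Equiv.equivOfIsEmpty _ _, fun _ x => isEmptyElim x⟩

theorem Iso.card_eq {X Y : FinGSet G} (h : Iso X Y) : Nat.card X.X = Nat.card Y.X :=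
  Nat.card_congr h.choose

noncomputable def triv (m : ℕ) : FinGSet G where
  X := Fin m
  act := { smul := fun _ x => x, one_smul := fun _ => rfl, mul_smul := fun _ _ _ => rfl }

structure IsBurnsideRingHom {A : Type} [CommRing A] (χ : FinGSet G → A) : Prop where
  congr : ∀ X Y : FinGSet G, Iso X Y → χ X = χ Y
  map_sum : ∀ X Y : FinGSet G, χ (X.sum Y) = χ X + χ Y
  map_prod : ∀ X Y : FinGSet G, χ (X.prod Y) = χ X * χ Y
  map_pt : χ pt = 1

theorem IsBurnsideRingHom.map_triv {A : Type} [CommRing A] {χ : FinGSet G → A}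
    (hχ : IsBurnsideRingHom χ) (m : ℕ) : χ (triv m) = m := by
  induction m with
  | zero =>
    have h := hχ.map_sum (triv 0) (triv 0)
    rw [hχ.congr _ (triv 0) (iso_of_isEmpty (show IsEmpty (Fin 0 ⊕ Fin 0) from inferInstance)
      (show IsEmpty (Fin 0) from inferInstance))] at h
    simpa using h
  | succ m ih =>
    have e : Iso (pt.sum (triv m)) (triv (m + 1) : FinGSet G) :=
      ⟨(finSuccEquiv m).trans ((Equiv.optionEquivSumPUnit _).trans (Equiv.sumComm _ _)) |>.symm,
        by rintro g (x | x) <;> rfl⟩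
    rw [← hχ.congr _ _ e, hχ.map_sum, hχ.map_pt, ih]
    push_cast
    ring

theorem exists_sub_eq_prod_sub {ι : Type*} (F : FinGSet G) (c : ι → ℕ) (s : Finset ι) :
    ∃ P N : FinGSet G, ∀ (A : Type) [CommRing A] (χ : FinGSet G → A), IsBurnsideRingHom χ →
      χ P - χ N = ∏ i ∈ s, (χ F - c i) := by
  classical
  induction s using Finset.induction_on with
  | empty => exact ⟨pt, triv 0, fun A _ χ hχ => by simp [hχ.map_pt, hχ.map_triv]⟩
  | insert i s hi ih =>
    obtain ⟨P, N, hPN⟩ := ih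
    refine ⟨(F.prod P).sum ((triv (c i)).prod N), (F.prod N).sum ((triv (c i)).prod P),
      fun A _ χ hχ => ?_⟩
    rw [Finset.prod_insert hi, ← hPN A χ hχ]
    simp only [hχ.map_sum, hχ.map_prod, hχ.map_triv]
    ring

noncomputable def mark (K : Subgroup G) (X : FinGSet G) : ℕ :=
  Nat.card (fixedPoints K X.X)

theorem mark_congr {K : Subgroup G} {X Y : FinGSet G} (h : Iso X Y) : mark K X = mark K Y := by
  obtain ⟨e, he⟩ := h
  exact Nat.card_congr (e.subtypeEquiv fun x => forall_congr' fun k => by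
    rw [← e.apply_eq_iff_eq]
    exact iff_of_eq (congrArg (· = e x) (he k x)))

theorem mark_sum (K : Subgroup G) (X Y : FinGSet G) :
    mark K (X.sum Y) = mark K X + mark K Y := by
  have e : fixedPoints K (X.sum Y).X ≃ fixedPoints K X.X ⊕ fixedPoints K Y.X :=
    (Equiv.subtypeSum (p := (· ∈ fixedPoints K (X.sum Y).X))).trans
      (Equiv.sumCongr
        (Equiv.subtypeEquivRight fun _ => forall_congr' fun _ => Sum.inl_injective.eq_iff)
        (Equiv.subtypeEquivRight fun _ => forall_congr' fun _ => Sum.inr_injective.eq_iff))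
  rw [mark, Nat.card_congr e, Nat.card_sum]
  rfl

theorem mark_prod (K : Subgroup G) (X Y : FinGSet G) :
    mark K (X.prod Y) = mark K X * mark K Y := by
  have e : fixedPoints K (X.prod Y).X ≃ fixedPoints K X.X × fixedPoints K Y.X :=
    { toFun := fun p => (⟨p.1.1, fun k => congrArg Prod.fst (p.2 k)⟩,
        ⟨p.1.2, fun k => congrArg Prod.snd (p.2 k)⟩)
      invFun := fun p => ⟨(p.1.1, p.2.1), fun k => Prod.ext (p.1.2 k) (p.2.2 k)⟩
      left_inv := fun _ => rfl
      right_inv := fun _ => rfl }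
  rw [mark, Nat.card_congr e, Nat.card_prod]
  rfl

theorem mark_pt (K : Subgroup G) : mark K (pt : FinGSet G) = 1 := by
  rw [mark, Nat.card_eq_one_iff_unique]
  exact ⟨⟨fun _ _ => Subtype.ext rfl⟩, ⟨⟨PUnit.unit, fun _ => rfl⟩⟩⟩

theorem isBurnsideRingHom_mark (K : Subgroup G) : IsBurnsideRingHom fun X => (mark K X : ℤ) where
  congr _ _ h := congrArg _ (mark_congr h)
  map_sum X Y := by simp only [mark_sum, Nat.cast_add]
  map_prod X Y := by simp only [mark_prod, Nat.cast_mul]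
  map_pt := by simp only [mark_pt, Nat.cast_one]

theorem mark_ne_zero_iff {K : Subgroup G} {X : FinGSet G} :
    mark K X ≠ 0 ↔ ∃ x : X.X, K ≤ stabilizer G x := by
  rw [mark, Nat.card_ne_zero, and_iff_left Subtype.finite, nonempty_subtype]
  exact exists_congr fun _ => mem_fixedPoints_iff_le_stabilizer

theorem mark_map_conj (K : Subgroup G) (g : G) (X : FinGSet G) :
    mark (K.map (MulAut.conj g).toMonoidHom) X = mark K X :=
  (Nat.card_congr ((toPerm g).subtypeEquiv fun x => by
    rw [mem_fixedPoints_iff_le_stabilizer, mem_fixedPoints_iff_le_stabilizer, toPerm_apply,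
      stabilizer_smul_eq_stabilizer_map_conj,
      Subgroup.map_le_map_iff_of_injective (MulAut.conj g).injective])).symm

theorem mem_fixedPoints_funPow_iff (Z : Type) [Fintype Z] [DecidableEq Z] [MulAction G Z]
    (n : ℕ) (K : Subgroup G) (f : (funPow (G := G) Z n).X) :
    f ∈ fixedPoints K (funPow (G := G) Z n).X ↔ orbitRel K Z ≤ Setoid.ker f := by
  constructor
  · rintro hf _ b ⟨k, rfl⟩
    calc f (k • b) = f ((k : G)⁻¹⁻¹ • b) := by rw [inv_inv]; rfl
      _ = f b := congrFun (hf k⁻¹) b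
  · intro h k
    funext z
    exact h ⟨k⁻¹, rfl⟩

theorem mark_funPow (K : Subgroup G) (Z : Type) [Fintype Z] [DecidableEq Z] [MulAction G Z]
    (n : ℕ) : mark K (funPow Z n) = n ^ Nat.card (orbitRel.Quotient K Z) := by
  calc mark K (funPow Z n) = Nat.card (orbitRel.Quotient K Z → Fin n) :=
        Nat.card_congr ((Equiv.subtypeEquivRight (mem_fixedPoints_funPow_iff Z n K)).trans
          (Setoid.liftEquiv _))
    _ = n ^ Nat.card (orbitRel.Quotient K Z) := by rw [Nat.card_fun, Nat.card_fin]

noncomputable def restrict (X : FinGSet G) (S : SubMulAction G X.X) : FinGSet G where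
  X := S
  fin := Fintype.ofFinite S

theorem iso_restrict_sum_compl (X : FinGSet G) (S : SubMulAction G X.X) :
    Iso ((X.restrict S).sum (X.restrict Sᶜ)) X := by
  classical
  exact ⟨Equiv.sumCompl (· ∈ S), by rintro g (x | x) <;> rfl⟩

theorem iso_restrict_orbit {X Y : FinGSet G} {x : X.X} {y : Y.X}
    (h : stabilizer G x = stabilizer G y) :
    Iso (X.restrict (orbitSubMulAction G x)) (Y.restrict (orbitSubMulAction G y)) := by
  let φx : (X.restrict (orbitSubMulAction G x)).X ≃ G ⧸ stabilizer G x :=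
    orbitEquivQuotientStabilizer G x
  let φy : (Y.restrict (orbitSubMulAction G y)).X ≃ G ⧸ stabilizer G y :=
    orbitEquivQuotientStabilizer G y
  let ψ := Subgroup.quotientEquivOfEq h
  refine ⟨φx.trans (ψ.trans φy.symm), fun g z => ?_⟩
  obtain ⟨q, rfl⟩ := φx.symm.surjective z
  have hx : g • φx.symm q = φx.symm (g • q) :=
    Subtype.ext (orbitEquivQuotientStabilizer_symm_smul x g q).symm
  have hψ : ψ (g • q) = g • ψ q := by
    induction q using QuotientGroup.induction_on
    rfl
  show φy.symm (ψ (φx (g • φx.symm q))) = g • φy.symm (ψ (φx (φx.symm q)))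
  rw [hx, Equiv.apply_symm_apply, Equiv.apply_symm_apply, hψ]
  exact Subtype.ext (orbitEquivQuotientStabilizer_symm_smul y g (ψ q))

theorem exists_stabilizer_eq_of_mark_eq {X Y : FinGSet G} [Nonempty X.X]
    (h : ∀ K, mark K X = mark K Y) : ∃ (x : X.X) (y : Y.X), stabilizer G x = stabilizer G y := by
  obtain ⟨x, -, hx⟩ := Set.finite_univ.exists_maximalFor (fun x : X.X => stabilizer G x) _
    Set.univ_nonempty
  obtain ⟨y, hy⟩ := mark_ne_zero_iff.1 (h (stabilizer G x) ▸ mark_ne_zero_iff.2 ⟨x, le_rfl⟩)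
  obtain ⟨x', hx'⟩ :=
    mark_ne_zero_iff.1 ((h (stabilizer G y)).symm ▸ mark_ne_zero_iff.2 ⟨y, le_rfl⟩)
  exact ⟨x, y, le_antisymm hy (hx'.trans (hx (Set.mem_univ x') (hy.trans hx')))⟩

theorem iso_of_mark_eq {X Y : FinGSet G} (h : ∀ K, mark K X = mark K Y) : Iso X Y := by
  rcases isEmpty_or_nonempty X.X with hX | hX
  · refine iso_of_isEmpty hX (isEmpty_iff.2 fun y => ?_)
    obtain ⟨x, -⟩ := mark_ne_zero_iff.1 (by rw [h]; exact mark_ne_zero_iff.2 ⟨y, bot_le⟩ :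
      mark ⊥ X ≠ 0)
    exact hX.false x
  obtain ⟨x, y, hxy⟩ := exists_stabilizer_eq_of_mark_eq h
  have hdX := iso_restrict_sum_compl X (orbitSubMulAction G x)
  have hdY := iso_restrict_sum_compl Y (orbitSubMulAction G y)
  have horb := iso_restrict_orbit hxy
  have hcompl : ∀ K, mark K (X.restrict (orbitSubMulAction G x)ᶜ) =
      mark K (Y.restrict (orbitSubMulAction G y)ᶜ) := fun K => by
    have := h K
    rw [← mark_congr hdX, ← mark_congr hdY, mark_sum, mark_sum, mark_congr horb] at this
    exact Nat.add_left_cancel this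
  have hlt : Nat.card (X.restrict (orbitSubMulAction G x)ᶜ).X < Nat.card X.X := by
    have : Nonempty (X.restrict (orbitSubMulAction G x)).X := ⟨⟨x, mem_orbit_self x⟩⟩
    have := Nat.card_pos (α := (X.restrict (orbitSubMulAction G x)).X)
    rw [← hdX.card_eq]
    change _ < Nat.card (_ ⊕ _)
    rw [Nat.card_sum]
    omega
  exact hdX.symm.trans ((horb.sum_congr (iso_of_mark_eq hcompl)).trans hdY)
termination_by Nat.card X.X
decreasing_by exact hlt

end FinGSet

theorem burnside_product_vanishes_general
    (G : Type) [Group G] (Z : Type) [Fintype Z] [DecidableEq Z] [MulAction G Z]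
    (n : ℕ)
    (A : Type) [CommRing A] (χ : FinGSet G → A)
    (hiso : ∀ X Y : FinGSet G, FinGSet.Iso X Y → χ X = χ Y)
    (hadd : ∀ X Y : FinGSet G, χ (X.sum Y) = χ X + χ Y)
    (hmul : ∀ X Y : FinGSet G, χ (X.prod Y) = χ X * χ Y)
    (hone : χ FinGSet.pt = 1)
    (s : Finset (Subgroup G))
    (hs : ∀ K : Subgroup G, ∃! H, H ∈ s ∧
        ∃ g : G, Subgroup.map (MulAut.conj g).toMonoidHom H = K) :
    ∏ H ∈ s, (χ (FinGSet.funPow Z n) - (n : A) ^ Nat.card (MulAction.orbitRel.Quotient H Z))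
      = 0 := by
  obtain ⟨P, N, hPN⟩ := FinGSet.exists_sub_eq_prod_sub (FinGSet.funPow (G := G) Z n)
    (fun H : Subgroup G => n ^ Nat.card (orbitRel.Quotient H Z)) s
  have hmark : ∀ K, FinGSet.mark K P = FinGSet.mark K N := by
    intro K
    obtain ⟨H, ⟨hH, g, rfl⟩, -⟩ := hs K
    have hK := hPN ℤ _ (FinGSet.isBurnsideRingHom_mark (H.map (MulAut.conj g).toMonoidHom))
    rw [Finset.prod_eq_zero hH (by rw [FinGSet.mark_map_conj, FinGSet.mark_funPow, sub_self])]
      at hK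
    exact_mod_cast sub_eq_zero.1 hK
  have hχ := hPN A χ ⟨hiso, hadd, hmul, hone⟩
  push_cast at hχ
  rw [← hχ, hiso _ _ (FinGSet.iso_of_mark_eq hmark), sub_self]

/-- (Burnside-ring identity, phrased via the universal property of the
Burnside ring `A(G)`: an element of `A(G)` is `0` iff every additive, multiplicative,
isomorphism-invariant, unital invariant of finite `G`-sets with values in a commutative
ring kills it.)  For a finite group `G`, a finite `G`-set `Z`, `n ≥ 1`, and a system
`s` of representatives of the conjugacy classes of subgroups of `G`,
`∏_{H ∈ s} ([n^Z] − n^{|Z/H|}) = 0` in `A(G)`. -/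
theorem burnside_product_vanishes
    (G : Type) [Group G] [Fintype G] (Z : Type) [Fintype Z] [DecidableEq Z] [MulAction G Z]
    (n : ℕ) (hn : 1 ≤ n)
    (A : Type) [CommRing A] (χ : FinGSet G → A)
    (hiso : ∀ X Y : FinGSet G, FinGSet.Iso X Y → χ X = χ Y)
    (hadd : ∀ X Y : FinGSet G, χ (X.sum Y) = χ X + χ Y)
    (hmul : ∀ X Y : FinGSet G, χ (X.prod Y) = χ X * χ Y)
    (hone : χ FinGSet.pt = 1)
    (s : Finset (Subgroup G))
    (hs : ∀ K : Subgroup G, ∃! H, H ∈ s ∧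
        ∃ g : G, Subgroup.map (MulAut.conj g).toMonoidHom H = K) :
    ∏ H ∈ s, (χ (FinGSet.funPow Z n) - (n : A) ^ Nat.card (MulAction.orbitRel.Quotient H Z))
      = 0 :=
  burnside_product_vanishes_general G Z n A χ hiso hadd hmul hone s hs
end

section
/- Let k ≥ 1 and let n, n_0, ..., n_k be positive integers with n = gcd(n_0, ..., n_k). Then there exists a matrix X ∈ SL(k+1, ℤ) with nonnegative integer entries such that X·(n, n, ..., n)ᵀ = (n_0, n_1, ..., n_k)ᵀ. -/
open Matrix Finset

private lemma int_gcd_nonneg {ι : Type*} (s : Finset ι) (f : ι → ℤ) : 0 ≤ s.gcd f := by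
  rw [← Finset.normalize_gcd, ← Int.abs_eq_normalize]
  exact abs_nonneg _

private lemma aux_sl (N : ℕ) : ∀ (m : ℕ) (v : Fin (m + 1) → ℤ), (∀ i, 0 < v i) →
    (∑ i, (v i).toNat) ≤ N →
    ∃ X : Matrix (Fin (m + 1)) (Fin (m + 1)) ℤ,
      X.det = 1 ∧ (∀ i j, 0 ≤ X i j) ∧ X.mulVec (fun _ => Finset.univ.gcd v) = v := by
  induction N with
  | zero =>
    intro m v hv hsum
    exfalso
    have h0 : 1 ≤ (v 0).toNat := by
      have := hv 0; omega
    have : (v 0).toNat ≤ ∑ i, (v i).toNat :=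
      Finset.single_le_sum (f := fun i => (v i).toNat) (fun i _ => Nat.zero_le _) (mem_univ 0)
    omega
  | succ N ih =>
    intro m v hv hsum
    by_cases hconst : ∀ i, v i = v 0
    · -- all entries equal; gcd is v 0
      have hg : Finset.univ.gcd v = v 0 := by
        apply Int.dvd_antisymm (int_gcd_nonneg _ _) (le_of_lt (hv 0))
        · exact Finset.gcd_dvd (mem_univ 0)
        · exact Finset.dvd_gcd (fun i _ => by rw [hconst i])
      refine ⟨1, Matrix.det_one, ?_, ?_⟩
      · intro i j
        simp [Matrix.one_apply]
        split <;> norm_num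
      · rw [Matrix.one_mulVec]
        funext t
        rw [hg, hconst t]
    · push_neg at hconst
      obtain ⟨i, hi⟩ := hconst
      -- get a b with a ≠ b and v b < v a
      obtain ⟨a, b, hab, hlt⟩ : ∃ a b : Fin (m + 1), a ≠ b ∧ v b < v a := by
        rcases lt_or_gt_of_ne hi with h | h
        · exact ⟨0, i, fun he => hi (by rw [he]), h⟩
        · exact ⟨i, 0, fun he => hi (by rw [he]), h⟩
      set v' : Fin (m + 1) → ℤ := Function.update v a (v a - v b) with hv'def
      have hv'a : v' a = v a - v b := Function.update_self a _ v
      have hv'ne : ∀ t, t ≠ a → v' t = v t := fun t ht => Function.update_of_ne ht _ v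
      have hv'b : v' b = v b := hv'ne b (Ne.symm hab)
      have hv' : ∀ t, 0 < v' t := by
        intro t
        rcases eq_or_ne t a with rfl | ht
        · rw [hv'a]; omega
        · rw [hv'ne t ht]; exact hv t
      -- gcd preserved
      have hgcd : Finset.univ.gcd v' = Finset.univ.gcd v := by
        apply Int.dvd_antisymm (int_gcd_nonneg _ _) (int_gcd_nonneg _ _)
        · apply Finset.dvd_gcd
          intro t _
          rcases eq_or_ne t a with rfl | ht
          · have h1 : Finset.univ.gcd v' ∣ v' t := Finset.gcd_dvd (mem_univ t)
            have h2 : Finset.univ.gcd v' ∣ v' b := Finset.gcd_dvd (mem_univ b)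
            have : v t = v' t + v' b := by rw [hv'a, hv'b]; ring
            rw [this]; exact dvd_add h1 h2
          · rw [← hv'ne t ht]; exact Finset.gcd_dvd (mem_univ t)
        · apply Finset.dvd_gcd
          intro t _
          rcases eq_or_ne t a with rfl | ht
          · rw [hv'a]
            exact dvd_sub (Finset.gcd_dvd (mem_univ t)) (Finset.gcd_dvd (mem_univ b))
          · rw [hv'ne t ht]; exact Finset.gcd_dvd (mem_univ t)
      -- sum decreases
      have hsum' : (∑ t, (v' t).toNat) ≤ N := by
        have key : ∀ t, (v' t).toNat ≤ (v t).toNat := by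
          intro t
          rcases eq_or_ne t a with rfl | ht
          · rw [hv'a]; have := hv b; omega
          · rw [hv'ne t ht]
        have hstrict : (v' a).toNat < (v a).toNat := by
          rw [hv'a]; have := hv b; have := hv a; omega
        have h1 : ∑ t, (v' t).toNat < ∑ t, (v t).toNat :=
          Finset.sum_lt_sum (fun t _ => key t) ⟨a, mem_univ a, hstrict⟩
        omega
      obtain ⟨X', hdet', hpos', hmul'⟩ := ih m v' hv' hsum'
      rw [hgcd] at hmul'
      refine ⟨Matrix.transvection a b 1 * X', ?_, ?_, ?_⟩
      · rw [Matrix.det_mul, Matrix.det_transvection_of_ne a b hab, hdet', one_mul]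
      · intro p q
        rw [Matrix.mul_apply]
        apply Finset.sum_nonneg
        intro c _
        apply mul_nonneg _ (hpos' c q)
        simp only [Matrix.transvection, Matrix.add_apply, Matrix.one_apply,
          Matrix.single, Matrix.of_apply]
        split_ifs <;> norm_num
      · rw [← Matrix.mulVec_mulVec, hmul']
        funext t
        simp only [Matrix.transvection, Matrix.add_mulVec, Matrix.one_mulVec, Pi.add_apply]
        have hstd : (Matrix.single a b (1 : ℤ)).mulVec v' t
            = if a = t then v' b else 0 := by
          simp [Matrix.mulVec, Matrix.single, dotProduct, ite_and,
            Finset.sum_ite_eq]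
        rw [hstd]
        rcases eq_or_ne t a with rfl | ht
        · rw [if_pos rfl, hv'a, hv'b]; ring
        · rw [if_neg (Ne.symm ht), hv'ne t ht, add_zero]

/-- Let `k ≥ 1` and let `n, n₀, …, n_k` be positive integers with
`n = gcd(n₀, …, n_k)`.  Then there is a matrix `X ∈ SL(k+1, ℤ)` with nonnegative entries
such that `X · (n, …, n)ᵀ = (n₀, …, n_k)ᵀ`. -/
theorem exists_sl_nonneg_matrix
    (k : ℕ) (hk : 1 ≤ k) (v : Fin (k + 1) → ℤ) (hv : ∀ i, 0 < v i)
    (n : ℤ) (hn : n = Finset.univ.gcd v) :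
    ∃ X : Matrix (Fin (k + 1)) (Fin (k + 1)) ℤ,
      X.det = 1 ∧ (∀ i j, 0 ≤ X i j) ∧ X.mulVec (fun _ => n) = v := by
  subst hn
  exact aux_sl (∑ i, (v i).toNat) k v hv le_rfl
end
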